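/- Let W be a finite-dimensional irreducible A[-1]-module such that 0 is not an eigenvalue of the action of Ψ. Then dim W = 2, and there exist a nonzero λ ∈ ℂ and a basis {v₁, v₂} of W with Ψv₁ = λv₁, Ψv₂ = −λv₂, Fv₁ = v₂, Fv₂ = 0, Ev₁ = 0, Ev₂ = λv₁. -/

import Mathlib

noncomputable section

/-- The relations defining the algebra `A[α]`: `E² = α⁻¹E²`, `F² = αF²`,
`ΨE = α⁻¹EΨ`, `ΨF = αFΨ`, `EF - FE = Ψ`, where `E, F, Ψ` are the generators
`ι 0, ι 1, ι 2` of the free algebra on three generators. -/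
inductive ARel (α : ℂ) : FreeAlgebra ℂ (Fin 3) → FreeAlgebra ℂ (Fin 3) → Prop
  | ee : ARel α (FreeAlgebra.ι ℂ (0 : Fin 3) * FreeAlgebra.ι ℂ (0 : Fin 3))
      (α⁻¹ • (FreeAlgebra.ι ℂ (0 : Fin 3) * FreeAlgebra.ι ℂ (0 : Fin 3)))
  | ff : ARel α (FreeAlgebra.ι ℂ (1 : Fin 3) * FreeAlgebra.ι ℂ (1 : Fin 3))
      (α • (FreeAlgebra.ι ℂ (1 : Fin 3) * FreeAlgebra.ι ℂ (1 : Fin 3)))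
  | pe : ARel α (FreeAlgebra.ι ℂ (2 : Fin 3) * FreeAlgebra.ι ℂ (0 : Fin 3))
      (α⁻¹ • (FreeAlgebra.ι ℂ (0 : Fin 3) * FreeAlgebra.ι ℂ (2 : Fin 3)))
  | pf : ARel α (FreeAlgebra.ι ℂ (2 : Fin 3) * FreeAlgebra.ι ℂ (1 : Fin 3))
      (α • (FreeAlgebra.ι ℂ (1 : Fin 3) * FreeAlgebra.ι ℂ (2 : Fin 3)))
  | ef : ARel α (FreeAlgebra.ι ℂ (0 : Fin 3) * FreeAlgebra.ι ℂ (1 : Fin 3)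
        - FreeAlgebra.ι ℂ (1 : Fin 3) * FreeAlgebra.ι ℂ (0 : Fin 3))
      (FreeAlgebra.ι ℂ (2 : Fin 3))

/-- The algebra `A[α]`. -/
abbrev AAlg (α : ℂ) := RingQuot (ARel α)

/-- The generator `E` of `A[α]`. -/
def Egen (α : ℂ) : AAlg α := RingQuot.mkAlgHom ℂ (ARel α) (FreeAlgebra.ι ℂ 0)

/-- The generator `F` of `A[α]`. -/
def Fgen (α : ℂ) : AAlg α := RingQuot.mkAlgHom ℂ (ARel α) (FreeAlgebra.ι ℂ 1)

/-- The generator `Ψ` of `A[α]`. -/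
def Pgen (α : ℂ) : AAlg α := RingQuot.mkAlgHom ℂ (ARel α) (FreeAlgebra.ι ℂ 2)

end

section Rels

private lemma rel_e2 : Egen (-1) * Egen (-1) = 0 := by
  have h := RingQuot.mkAlgHom_rel ℂ (ARel.ee (α := (-1 : ℂ)))
  simp only [map_mul, map_smul] at h
  have h2 : Egen (-1) * Egen (-1) = ((-1 : ℂ)⁻¹) • (Egen (-1) * Egen (-1)) := h
  have hinv : ((-1 : ℂ)⁻¹) = -1 := by norm_num
  rw [hinv] at h2
  have hneg : (-1 : ℂ) • (Egen (-1) * Egen (-1)) = -(Egen (-1) * Egen (-1)) := by module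
  rw [hneg] at h2
  have h3 : (2 : ℂ) • (Egen (-1) * Egen (-1)) = 0 := by
    have ht : (2 : ℂ) • (Egen (-1) * Egen (-1))
        = (Egen (-1) * Egen (-1)) + (Egen (-1) * Egen (-1)) := by module
    rw [ht]
    nth_rewrite 1 [h2]
    exact neg_add_cancel _
  calc Egen (-1) * Egen (-1) = (2 : ℂ)⁻¹ • ((2 : ℂ) • (Egen (-1) * Egen (-1))) := by module
    _ = (2 : ℂ)⁻¹ • (0 : AAlg (-1)) := by rw [h3]
    _ = 0 := smul_zero _

private lemma rel_f2 : Fgen (-1) * Fgen (-1) = 0 := by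
  have h := RingQuot.mkAlgHom_rel ℂ (ARel.ff (α := (-1 : ℂ)))
  simp only [map_mul, map_smul] at h
  have h2 : Fgen (-1) * Fgen (-1) = ((-1 : ℂ)) • (Fgen (-1) * Fgen (-1)) := h
  have hneg : (-1 : ℂ) • (Fgen (-1) * Fgen (-1)) = -(Fgen (-1) * Fgen (-1)) := by module
  rw [hneg] at h2
  have h3 : (2 : ℂ) • (Fgen (-1) * Fgen (-1)) = 0 := by
    have ht : (2 : ℂ) • (Fgen (-1) * Fgen (-1))
        = (Fgen (-1) * Fgen (-1)) + (Fgen (-1) * Fgen (-1)) := by module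
    rw [ht]
    nth_rewrite 1 [h2]
    exact neg_add_cancel _
  calc Fgen (-1) * Fgen (-1) = (2 : ℂ)⁻¹ • ((2 : ℂ) • (Fgen (-1) * Fgen (-1))) := by module
    _ = (2 : ℂ)⁻¹ • (0 : AAlg (-1)) := by rw [h3]
    _ = 0 := smul_zero _

private lemma rel_pe : Pgen (-1) * Egen (-1) = -(Egen (-1) * Pgen (-1)) := by
  have h := RingQuot.mkAlgHom_rel ℂ (ARel.pe (α := (-1 : ℂ)))
  simp only [map_mul, map_smul] at h
  have h2 : Pgen (-1) * Egen (-1) = ((-1 : ℂ)⁻¹) • (Egen (-1) * Pgen (-1)) := h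
  have hinv : ((-1 : ℂ)⁻¹) = -1 := by norm_num
  rw [hinv] at h2
  have hneg : (-1 : ℂ) • (Egen (-1) * Pgen (-1)) = -(Egen (-1) * Pgen (-1)) := by module
  rw [hneg] at h2
  exact h2

private lemma rel_pf : Pgen (-1) * Fgen (-1) = -(Fgen (-1) * Pgen (-1)) := by
  have h := RingQuot.mkAlgHom_rel ℂ (ARel.pf (α := (-1 : ℂ)))
  simp only [map_mul, map_smul] at h
  have h2 : Pgen (-1) * Fgen (-1) = ((-1 : ℂ)) • (Fgen (-1) * Pgen (-1)) := h
  have hneg : (-1 : ℂ) • (Fgen (-1) * Pgen (-1)) = -(Fgen (-1) * Pgen (-1)) := by module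
  rw [hneg] at h2
  exact h2

private lemma rel_ef : Egen (-1) * Fgen (-1) - Fgen (-1) * Egen (-1) = Pgen (-1) := by
  have h := RingQuot.mkAlgHom_rel ℂ (ARel.ef (α := (-1 : ℂ)))
  simp only [map_sub, map_mul] at h
  exact h

end Rels

section ActLemmas

variable {W : Type} [AddCommGroup W] [Module ℂ W] [Module (AAlg (-1)) W]
  [IsScalarTower ℂ (AAlg (-1)) W]

private lemma smul_comm_c (a : AAlg (-1)) (c : ℂ) (w : W) :
    a • (c • w) = c • (a • w) := by
  rw [← algebraMap_smul (AAlg (-1)) c w, ← mul_smul, ← Algebra.commutes, mul_smul,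
    algebraMap_smul]

private lemma actE2 (w : W) : Egen (-1) • Egen (-1) • w = 0 := by
  rw [← mul_smul, rel_e2, zero_smul]

private lemma actF2 (w : W) : Fgen (-1) • Fgen (-1) • w = 0 := by
  rw [← mul_smul, rel_f2, zero_smul]

private lemma actPE (w : W) : Pgen (-1) • Egen (-1) • w = -(Egen (-1) • Pgen (-1) • w) := by
  rw [← mul_smul, rel_pe, neg_smul, mul_smul]

private lemma actPF (w : W) : Pgen (-1) • Fgen (-1) • w = -(Fgen (-1) • Pgen (-1) • w) := by
  rw [← mul_smul, rel_pf, neg_smul, mul_smul]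

private lemma actEF (w : W) :
    Egen (-1) • Fgen (-1) • w - Fgen (-1) • Egen (-1) • w = Pgen (-1) • w := by
  rw [← mul_smul, ← mul_smul, ← sub_smul, rel_ef]

end ActLemmas

theorem simple_module_with_psi_invertible_is_two_dimensional
    (W : Type) [AddCommGroup W] [Module ℂ W] [Module (AAlg (-1)) W]
    [IsScalarTower ℂ (AAlg (-1)) W] [FiniteDimensional ℂ W]
    (hsimple : IsSimpleModule (AAlg (-1)) W)
    (hinj : ∀ w : W, Pgen (-1) • w = 0 → w = 0) :
    Module.finrank ℂ W = 2 ∧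
    ∃ (μ : ℂ), μ ≠ 0 ∧ ∃ v₁ v₂ : W,
      LinearIndependent ℂ ![v₁, v₂] ∧
      Submodule.span ℂ ({v₁, v₂} : Set W) = ⊤ ∧
      Pgen (-1) • v₁ = μ • v₁ ∧ Pgen (-1) • v₂ = (-μ) • v₂ ∧
      Fgen (-1) • v₁ = v₂ ∧ Fgen (-1) • v₂ = 0 ∧
      Egen (-1) • v₁ = 0 ∧ Egen (-1) • v₂ = μ • v₁ := by
  haveI := hsimple
  haveI : Nontrivial W := IsSimpleModule.nontrivial (AAlg (-1)) W
  -- the action of Ψ as a ℂ-linear endomorphism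
  let p : Module.End ℂ W :=
    { toFun := fun w => Pgen (-1) • w
      map_add' := fun x y => smul_add _ x y
      map_smul' := fun c w => smul_comm_c _ c w }
  obtain ⟨μ₀, hμ₀⟩ := Module.End.exists_eigenvalue p
  obtain ⟨v, hv⟩ := hμ₀.exists_hasEigenvector
  have hvP : Pgen (-1) • v = μ₀ • v := hv.apply_eq_smul
  have hv0 : v ≠ 0 := hv.right
  have hμ0 : μ₀ ≠ 0 := by
    rintro rfl
    exact hv0 (hinj v (by simpa using hvP))
  -- find an eigenvector killed by E
  obtain ⟨ν, hν, v₁, hv₁0, hPv₁, hEv₁⟩ :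
      ∃ ν : ℂ, ν ≠ 0 ∧ ∃ v₁ : W, v₁ ≠ 0 ∧ Pgen (-1) • v₁ = ν • v₁ ∧ Egen (-1) • v₁ = 0 := by
    by_cases hu : Egen (-1) • v = 0
    · exact ⟨μ₀, hμ0, v, hv0, hvP, hu⟩
    · refine ⟨-μ₀, neg_ne_zero.mpr hμ0, Egen (-1) • v, hu, ?_, actE2 v⟩
      rw [actPE, hvP, smul_comm_c, ← neg_smul]
  set v₂ : W := Fgen (-1) • v₁ with hv₂def
  have hFv₁ : Fgen (-1) • v₁ = v₂ := rfl
  have hFv₂ : Fgen (-1) • v₂ = 0 := actF2 v₁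
  have hEv₂ : Egen (-1) • v₂ = ν • v₁ := by
    have h := actEF v₁
    rw [hEv₁, smul_zero, sub_zero, hPv₁] at h
    exact h
  have hPv₂ : Pgen (-1) • v₂ = (-ν) • v₂ := by
    rw [hv₂def, actPF, hPv₁, smul_comm_c, ← neg_smul]
  have hv₂0 : v₂ ≠ 0 := by
    intro h0
    have h := actEF v₁
    rw [hEv₁, smul_zero, sub_zero, ← hv₂def, h0, smul_zero, hPv₁] at h
    exact hv₁0 (by simpa [hν] using (smul_eq_zero.mp h.symm))
  -- linear independence
  have hLI : LinearIndependent ℂ ![v₁, v₂] := by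
    rw [LinearIndependent.pair_iff' hv₁0]
    intro a ha
    -- apply Ψ to a • v₁ = v₂
    have h1 : Pgen (-1) • (a • v₁) = Pgen (-1) • v₂ := by rw [ha]
    rw [smul_comm_c, hPv₁, hPv₂, ← ha] at h1
    rw [smul_smul, smul_smul] at h1
    have h2 : ((a * ν) - (-ν * a)) • v₁ = 0 := by rw [sub_smul, h1, sub_self]
    rcases smul_eq_zero.mp h2 with h3 | h3
    · have ha0 : a = 0 := by
        have h4 : (2 * ν) * a = 0 := by linear_combination h3
        rcases mul_eq_zero.mp h4 with h | h
        · rcases mul_eq_zero.mp h with h | h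
          · exact absurd h (by norm_num)
          · exact absurd h hν
        · exact h
      exact hv₂0 (by rw [← ha, ha0, zero_smul])
    · exact hv₁0 h3
  -- span is everything
  set T : Submodule ℂ W := Submodule.span ℂ ({v₁, v₂} : Set W) with hTdef
  have hmemT : ∀ x ∈ ({v₁, v₂} : Set W), x ∈ T := fun x hx => Submodule.subset_span hx
  have hv₁T : v₁ ∈ T := hmemT v₁ (by simp)
  have hv₂T : v₂ ∈ T := hmemT v₂ (by simp)
  have key : ∀ a : AAlg (-1), a • v₁ ∈ T → a • v₂ ∈ T → ∀ w ∈ T, a • w ∈ T := by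
    intro a h1 h2 w hw
    induction hw using Submodule.span_induction with
    | mem x hx =>
      rcases hx with rfl | rfl
      · exact h1
      · exact h2
    | zero => rw [smul_zero]; exact zero_mem T
    | add x y _ _ hx hy => rw [smul_add]; exact add_mem hx hy
    | smul c x _ hx => rw [smul_comm_c]; exact Submodule.smul_mem T c hx
  have hT : ∀ (a : AAlg (-1)) (w : W), w ∈ T → a • w ∈ T := by
    intro a
    obtain ⟨x, rfl⟩ := RingQuot.mkAlgHom_surjective ℂ (ARel (-1)) a
    induction x using FreeAlgebra.induction with
    | grade0 r =>
      intro w hw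
      rw [AlgHom.commutes, algebraMap_smul]
      exact Submodule.smul_mem T r hw
    | grade1 i =>
      fin_cases i
      · exact key (Egen (-1)) (by rw [hEv₁]; exact zero_mem T)
          (by rw [hEv₂]; exact Submodule.smul_mem T ν hv₁T)
      · exact key (Fgen (-1)) (by rw [hFv₁]; exact hv₂T)
          (by rw [hFv₂]; exact zero_mem T)
      · exact key (Pgen (-1)) (by rw [hPv₁]; exact Submodule.smul_mem T ν hv₁T)
          (by rw [hPv₂]; exact Submodule.smul_mem T (-ν) hv₂T)
    | mul x y hx hy =>
      intro w hw
      rw [map_mul, mul_smul]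
      exact hx _ (hy w hw)
    | add x y hx hy =>
      intro w hw
      rw [map_add, add_smul]
      exact add_mem (hx w hw) (hy w hw)
  let S : Submodule (AAlg (-1)) W :=
    { carrier := (T : Set W)
      add_mem' := fun hx hy => add_mem hx hy
      zero_mem' := zero_mem T
      smul_mem' := fun a w hw => hT a w hw }
  have hS : S = ⊤ := by
    rcases eq_bot_or_eq_top S with h | h
    · exfalso
      have : v₁ ∈ S := hv₁T
      rw [h] at this
      exact hv₁0 this
    · exact h
  have hspan : T = ⊤ := by
    rw [Submodule.eq_top_iff']
    intro x
    have : x ∈ S := by rw [hS]; trivial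
    exact this
  have hrange : Set.range ![v₁, v₂] = ({v₁, v₂} : Set W) := by
    ext x
    simp only [Set.mem_range, Fin.exists_fin_two, Set.mem_insert_iff, Set.mem_singleton_iff,
      Matrix.cons_val_zero, Matrix.cons_val_one, Matrix.head_cons, eq_comm]
  have hfr : Module.finrank ℂ W = 2 := by
    let b : Module.Basis (Fin 2) ℂ W := Module.Basis.mk hLI (by rw [hrange, ← hTdef, hspan])
    simpa using Module.finrank_eq_card_basis b
  exact ⟨hfr, ν, hν, v₁, v₂, hLI, hspan, hPv₁, hPv₂, hFv₁, hFv₂, hEv₁, hEv₂⟩
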